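/- The quotient of Mat₂(q) by the two-sided ideal generated by Z12 is isomorphic as a K-algebra to the quantum affine space of rank 3, namely the K-algebra generated by x₁, x₂, x₃ with relations x₂·x₁ = q·x₁·x₂, x₃·x₁ = x₁·x₃, x₃·x₂ = x₂·x₃, via the correspondence Z11 ↦ x₁, Z21 ↦ x₂, Z22 ↦ x₃. -/
import Mathlib


noncomputable section

open FreeAlgebra MulOpposite

/-- The relations of the Dipper–Donkin quantized matrix algebra of rank 2:
`Z12·Z11 = Z11·Z12`, `Z21·Z11 = q·Z11·Z21`, `Z22·Z21 = Z21·Z22`, `Z22·Z12 = q·Z12·Z22`,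
`Z21·Z12 = q·Z12·Z21`, `Z22·Z11 = Z11·Z22 + (q−1)·Z12·Z21`, where the generators
`Z11, Z12, Z21, Z22` are the images of `0, 1, 2, 3 : Fin 4`. -/
inductive DDrel {K : Type*} [Field K] (q : K) :
    FreeAlgebra K (Fin 4) → FreeAlgebra K (Fin 4) → Prop
  | r1 : DDrel q (ι K (1 : Fin 4) * ι K (0 : Fin 4)) (ι K (0 : Fin 4) * ι K (1 : Fin 4))
  | r2 : DDrel q (ι K (2 : Fin 4) * ι K (0 : Fin 4)) (q • (ι K (0 : Fin 4) * ι K (2 : Fin 4)))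
  | r3 : DDrel q (ι K (3 : Fin 4) * ι K (2 : Fin 4)) (ι K (2 : Fin 4) * ι K (3 : Fin 4))
  | r4 : DDrel q (ι K (3 : Fin 4) * ι K (1 : Fin 4)) (q • (ι K (1 : Fin 4) * ι K (3 : Fin 4)))
  | r5 : DDrel q (ι K (2 : Fin 4) * ι K (1 : Fin 4)) (q • (ι K (1 : Fin 4) * ι K (2 : Fin 4)))
  | r6 : DDrel q (ι K (3 : Fin 4) * ι K (0 : Fin 4))
      (ι K (0 : Fin 4) * ι K (3 : Fin 4) + (q - 1) • (ι K (1 : Fin 4) * ι K (2 : Fin 4)))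

/-- The Dipper–Donkin quantized matrix algebra `Mat₂(q)`: the quotient of the free
`K`-algebra on four generators by the two-sided ideal generated by the relations above. -/
abbrev DDMat2 {K : Type*} [Field K] (q : K) := RingQuot (DDrel q)

variable {K : Type*} [Field K]

/-- The generator `Z11` of `Mat₂(q)`. -/
def Z11 (q : K) : DDMat2 q := RingQuot.mkAlgHom K (DDrel q) (ι K (0 : Fin 4))
/-- The generator `Z12` of `Mat₂(q)`. -/
def Z12 (q : K) : DDMat2 q := RingQuot.mkAlgHom K (DDrel q) (ι K (1 : Fin 4))
/-- The generator `Z21` of `Mat₂(q)`. -/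
def Z21 (q : K) : DDMat2 q := RingQuot.mkAlgHom K (DDrel q) (ι K (2 : Fin 4))
/-- The generator `Z22` of `Mat₂(q)`. -/
def Z22 (q : K) : DDMat2 q := RingQuot.mkAlgHom K (DDrel q) (ι K (3 : Fin 4))

/-- The relations of the quantum affine space of rank 3:
`x₂·x₁ = q·x₁·x₂`, `x₃·x₁ = x₁·x₃`, `x₃·x₂ = x₂·x₃`. -/
inductive QASrel {K : Type*} [Field K] (q : K) :
    FreeAlgebra K (Fin 3) → FreeAlgebra K (Fin 3) → Prop
  | r1 : QASrel q (ι K (1 : Fin 3) * ι K (0 : Fin 3)) (q • (ι K (0 : Fin 3) * ι K (1 : Fin 3)))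
  | r2 : QASrel q (ι K (2 : Fin 3) * ι K (0 : Fin 3)) (ι K (0 : Fin 3) * ι K (2 : Fin 3))
  | r3 : QASrel q (ι K (2 : Fin 3) * ι K (1 : Fin 3)) (ι K (1 : Fin 3) * ι K (2 : Fin 3))

/-- The quantum affine space of rank 3. -/
abbrev QAS3 {K : Type*} [Field K] (q : K) := RingQuot (QASrel q)

/-- The generator `x₁` of the quantum affine space. -/
def x1 (q : K) : QAS3 q := RingQuot.mkAlgHom K (QASrel q) (ι K (0 : Fin 3))
/-- The generator `x₂` of the quantum affine space. -/
def x2 (q : K) : QAS3 q := RingQuot.mkAlgHom K (QASrel q) (ι K (1 : Fin 3))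
/-- The generator `x₃` of the quantum affine space. -/
def x3 (q : K) : QAS3 q := RingQuot.mkAlgHom K (QASrel q) (ι K (2 : Fin 3))

/-- The relation identifying `Z12` with `0`; its `RingQuot` is the quotient of `Mat₂(q)`
by the two-sided ideal generated by `Z12`. -/
def Z12rel (q : K) : DDMat2 q → DDMat2 q → Prop := fun a b => a = Z12 q ∧ b = 0

/-- The quotient of `Mat₂(q)` by the two-sided ideal generated by `Z12`. -/
abbrev DDMat2QuotZ12 (q : K) := RingQuot (Z12rel q)

section Aux

variable (q : K)

local notation "π" => RingQuot.mkAlgHom K (Z12rel q)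

lemma piZ12 : RingQuot.mkAlgHom K (Z12rel q) (Z12 q) = 0 := by
  exact RingQuot.mkAlgHom_rel K (show Z12rel q (Z12 q) 0 from ⟨rfl, rfl⟩) |>.trans (map_zero _)

/-- The free algebra map to `QAS3`. -/
def freeToQAS : FreeAlgebra K (Fin 4) →ₐ[K] QAS3 q :=
  FreeAlgebra.lift K ![x1 q, 0, x2 q, x3 q]

lemma x2x1 : x2 q * x1 q = q • (x1 q * x2 q) := by
  have := RingQuot.mkAlgHom_rel K (QASrel.r1 (q := q))
  simpa [x1, x2, map_mul, map_smul] using this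

lemma x3x1 : x3 q * x1 q = x1 q * x3 q := by
  have := RingQuot.mkAlgHom_rel K (QASrel.r2 (q := q))
  simpa [x1, x3, map_mul] using this

lemma x3x2 : x3 q * x2 q = x2 q * x3 q := by
  have := RingQuot.mkAlgHom_rel K (QASrel.r3 (q := q))
  simpa [x2, x3, map_mul] using this

lemma freeToQAS_rel : ∀ ⦃x y : FreeAlgebra K (Fin 4)⦄, DDrel q x y →
    freeToQAS q x = freeToQAS q y := by
  intro x y h
  induction h <;>
    simp [freeToQAS, Matrix.cons_val_zero, Matrix.cons_val_one, x2x1, x3x1, x3x2]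

/-- The map `Mat₂(q) → QAS3`. -/
def ddToQAS : DDMat2 q →ₐ[K] QAS3 q :=
  RingQuot.liftAlgHom K ⟨freeToQAS q, freeToQAS_rel q⟩

lemma ddToQAS_rel : ∀ ⦃x y : DDMat2 q⦄, Z12rel q x y → ddToQAS q x = ddToQAS q y := by
  rintro x y ⟨rfl, rfl⟩
  simp [ddToQAS, Z12, RingQuot.liftAlgHom_mkAlgHom_apply, freeToQAS]

/-- The map to `QAS3` from the quotient. -/
def toQAS : DDMat2QuotZ12 q →ₐ[K] QAS3 q :=
  RingQuot.liftAlgHom K ⟨ddToQAS q, ddToQAS_rel q⟩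

lemma freeFromQAS_rel : ∀ ⦃x y : FreeAlgebra K (Fin 3)⦄, QASrel q x y →
    (FreeAlgebra.lift K ![π (Z11 q), π (Z21 q), π (Z22 q)]) x =
    (FreeAlgebra.lift K ![π (Z11 q), π (Z21 q), π (Z22 q)]) y := by
  intro x y h
  induction h with
  | r1 =>
      have := congrArg π (RingQuot.mkAlgHom_rel K (DDrel.r2 (q := q)))
      simpa [Z11, Z21, map_mul, map_smul] using this
  | r2 =>
      have h6 := congrArg π (RingQuot.mkAlgHom_rel K (DDrel.r6 (q := q)))
      have hz : π ((RingQuot.mkAlgHom K (DDrel q)) (ι K (1 : Fin 4))) = 0 := piZ12 q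
      simpa [Z11, Z12, Z21, Z22, map_mul, map_add, map_smul, hz] using h6
  | r3 =>
      have := congrArg π (RingQuot.mkAlgHom_rel K (DDrel.r3 (q := q)))
      simpa [Z21, Z22, map_mul] using this

/-- The map back from `QAS3`. -/
def fromQAS : QAS3 q →ₐ[K] DDMat2QuotZ12 q :=
  RingQuot.liftAlgHom K
    ⟨FreeAlgebra.lift K ![π (Z11 q), π (Z21 q), π (Z22 q)], freeFromQAS_rel q⟩

lemma toQAS_Z11 : toQAS q (π (Z11 q)) = x1 q := by
  simp [toQAS, ddToQAS, Z11, RingQuot.liftAlgHom_mkAlgHom_apply, freeToQAS]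
lemma toQAS_Z12 : toQAS q (π (Z12 q)) = 0 := by
  simp [toQAS, ddToQAS, Z12, RingQuot.liftAlgHom_mkAlgHom_apply, freeToQAS]
lemma toQAS_Z21 : toQAS q (π (Z21 q)) = x2 q := by
  simp [toQAS, ddToQAS, Z21, RingQuot.liftAlgHom_mkAlgHom_apply, freeToQAS]
lemma toQAS_Z22 : toQAS q (π (Z22 q)) = x3 q := by
  simp [toQAS, ddToQAS, Z22, RingQuot.liftAlgHom_mkAlgHom_apply, freeToQAS]

lemma fromQAS_x1 : fromQAS q (x1 q) = π (Z11 q) := by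
  simp [fromQAS, x1, RingQuot.liftAlgHom_mkAlgHom_apply]
lemma fromQAS_x2 : fromQAS q (x2 q) = π (Z21 q) := by
  simp [fromQAS, x2, RingQuot.liftAlgHom_mkAlgHom_apply]
lemma fromQAS_x3 : fromQAS q (x3 q) = π (Z22 q) := by
  simp [fromQAS, x3, RingQuot.liftAlgHom_mkAlgHom_apply]

lemma comp1 : (toQAS q).comp (fromQAS q) = AlgHom.id K (QAS3 q) := by
  apply RingQuot.ringQuot_ext'
  apply FreeAlgebra.hom_ext
  funext i
  simp only [AlgHom.coe_comp, Function.comp_apply, AlgHom.coe_id, id_eq]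
  fin_cases i
  · show toQAS q (fromQAS q (x1 q)) = x1 q
    rw [fromQAS_x1, toQAS_Z11]
  · show toQAS q (fromQAS q (x2 q)) = x2 q
    rw [fromQAS_x2, toQAS_Z21]
  · show toQAS q (fromQAS q (x3 q)) = x3 q
    rw [fromQAS_x3, toQAS_Z22]

lemma comp2 : (fromQAS q).comp (toQAS q) = AlgHom.id K (DDMat2QuotZ12 q) := by
  apply RingQuot.ringQuot_ext'
  apply RingQuot.ringQuot_ext'
  apply FreeAlgebra.hom_ext
  funext i
  simp only [AlgHom.coe_comp, Function.comp_apply, AlgHom.coe_id, id_eq]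
  fin_cases i
  · show fromQAS q (toQAS q (RingQuot.mkAlgHom K (Z12rel q) (Z11 q)))
      = RingQuot.mkAlgHom K (Z12rel q) (Z11 q)
    rw [show toQAS q (RingQuot.mkAlgHom K (Z12rel q) (Z11 q)) = x1 q from toQAS_Z11 q,
      fromQAS_x1]
  · show fromQAS q (toQAS q (RingQuot.mkAlgHom K (Z12rel q) (Z12 q)))
      = RingQuot.mkAlgHom K (Z12rel q) (Z12 q)
    rw [show toQAS q (RingQuot.mkAlgHom K (Z12rel q) (Z12 q)) = 0 from toQAS_Z12 q,
      map_zero, piZ12]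
  · show fromQAS q (toQAS q (RingQuot.mkAlgHom K (Z12rel q) (Z21 q)))
      = RingQuot.mkAlgHom K (Z12rel q) (Z21 q)
    rw [show toQAS q (RingQuot.mkAlgHom K (Z12rel q) (Z21 q)) = x2 q from toQAS_Z21 q,
      fromQAS_x2]
  · show fromQAS q (toQAS q (RingQuot.mkAlgHom K (Z12rel q) (Z22 q)))
      = RingQuot.mkAlgHom K (Z12rel q) (Z22 q)
    rw [show toQAS q (RingQuot.mkAlgHom K (Z12rel q) (Z22 q)) = x3 q from toQAS_Z22 q,
      fromQAS_x3]

end Aux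

/-- The quotient of `Mat₂(q)` by the two-sided ideal generated by `Z12`
is isomorphic as a `K`-algebra to the quantum affine space of rank 3 with relations
`x₂·x₁ = q·x₁·x₂`, `x₃·x₁ = x₁·x₃`, `x₃·x₂ = x₂·x₃`, via `Z11 ↦ x₁`, `Z21 ↦ x₂`,
`Z22 ↦ x₃`. -/
theorem DDMat2_quot_Z12_iso_quantum_affine_space (q : K) (hq : q ≠ 0) :
    ∃ φ : DDMat2QuotZ12 q ≃ₐ[K] QAS3 q,
      φ (RingQuot.mkAlgHom K (Z12rel q) (Z11 q)) = x1 q ∧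
      φ (RingQuot.mkAlgHom K (Z12rel q) (Z21 q)) = x2 q ∧
      φ (RingQuot.mkAlgHom K (Z12rel q) (Z22 q)) = x3 q := by
  exact ⟨AlgEquiv.ofAlgHom (toQAS q) (fromQAS q) (comp1 q) (comp2 q),
    toQAS_Z11 q, toQAS_Z21 q, toQAS_Z22 q⟩
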